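/- Fix γ ∈ (0, 1) and τ ∈ [0, 1 − γ]. Suppose λ ≥ 0 satisfies the fixed-point equation λ² · ∫ 1/(s + λ)² dMP(γ)(s) = τ. Then γ · ∫ s/(s + λ)² dMP(γ)(s) ≥ (γ/(1 − γ)) · (1 − √(τ/(1 − γ)))². -/

import Mathlib

/-!
For `γ < 1` the measure `MP γ` has a density on `[a, b] = [(1 - √γ)², (1 + √γ)²] ⊂ (0, ∞)`, and
explicit antiderivatives give `∫ 1/s = 1/(1 - γ)` and `∫ 1/s² = 1/(1 - γ)³`.
Split `1/s = 1/(s + λ) + λ/(s (s + λ))`. By Cauchy–Schwarz the last term integrates to at most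
`√(λ² ∫ 1/(s + λ)² · ∫ 1/s²) = √(τ/(1 - γ)) / (1 - γ)`, so `∫ 1/(s + λ)` is at least
`(1 - √(τ/(1 - γ))) / (1 - γ)`. A second Cauchy–Schwarz,
`(∫ 1/(s + λ))² ≤ ∫ s/(s + λ)² · ∫ 1/s`, turns this into the bound.
-/

open MeasureTheory


/-- The Marchenko–Pastur measure with aspect ratio `γ`: a point mass of weight
`max 0 (1 - 1/γ)` at `0` plus the absolutely continuous part with density
`s ↦ √((b - s)(s - a)) / (2πγs)` on `[a, b]`, where `a = (1 - √γ)²`, `b = (1 + √γ)²`. -/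
noncomputable def MP (γ : ℝ) : Measure ℝ :=
  ENNReal.ofReal (max 0 (1 - 1 / γ)) • Measure.dirac 0 +
    volume.withDensity
      (Set.indicator (Set.Icc ((1 - Real.sqrt γ) ^ 2) ((1 + Real.sqrt γ) ^ 2))
        (fun s => ENNReal.ofReal
          (Real.sqrt (((1 + Real.sqrt γ) ^ 2 - s) * (s - (1 - Real.sqrt γ) ^ 2)) /
            (2 * Real.pi * γ * s))))

open Real Set

section SemicircleIntegrals

variable {a b s : ℝ}

lemma hasDerivAt_sqrt_sub_mul_sub (hs : s ∈ Ioo a b) :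
    HasDerivAt (fun s => √((b - s) * (s - a)))
      ((a + b - 2 * s) / (2 * √((b - s) * (s - a)))) s := by
  have hQ : (b - s) * (s - a) ≠ 0 := (mul_pos (sub_pos.2 hs.2) (sub_pos.2 hs.1)).ne'
  have h : HasDerivAt (fun s => (b - s) * (s - a)) (-1 * (s - a) + (b - s) * 1) s :=
    ((hasDerivAt_id s).const_sub b).mul ((hasDerivAt_id s).sub_const a)
  exact (h.sqrt hQ).congr_deriv (by ring)

lemma hasDerivAt_sqrt_sub_mul_sub_div_pow (n : ℕ) (hs0 : s ≠ 0) (hs : s ∈ Ioo a b) :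
    HasDerivAt (fun s => √((b - s) * (s - a)) / s ^ n)
      (((a + b - 2 * s) * s - 2 * n * ((b - s) * (s - a))) /
        (2 * s ^ (n + 1) * √((b - s) * (s - a)))) s := by
  have hQ : 0 < (b - s) * (s - a) := mul_pos (sub_pos.2 hs.2) (sub_pos.2 hs.1)
  have hq : 0 < √((b - s) * (s - a)) := sqrt_pos.2 hQ
  refine ((hasDerivAt_sqrt_sub_mul_sub hs).div (hasDerivAt_pow n s)
    (pow_ne_zero n hs0)).congr_deriv ?_
  rcases n with _ | n
  · field_simp; ring
  · field_simp
    rw [sq_sqrt hQ.le]; push_cast; ring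

lemma hasDerivAt_arcsin_affine (hs : s ∈ Ioo a b) :
    HasDerivAt (fun s => arcsin ((2 * s - (a + b)) / (b - a)))
      (1 / √((b - s) * (s - a))) s := by
  obtain ⟨hs1, hs2⟩ := hs
  have hba : 0 < b - a := by linarith
  have hQ : 0 < (b - s) * (s - a) := mul_pos (by linarith) (by linarith)
  have hq : 0 < √((b - s) * (s - a)) := sqrt_pos.2 hQ
  have hlt : (2 * s - (a + b)) / (b - a) < 1 := by rw [div_lt_one hba]; linarith
  have hgt : -1 < (2 * s - (a + b)) / (b - a) := by rw [lt_div_iff₀ hba]; linarith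
  have hsqrt : √(1 - ((2 * s - (a + b)) / (b - a)) ^ 2) = 2 / (b - a) * √((b - s) * (s - a)) := by
    rw [show 1 - ((2 * s - (a + b)) / (b - a)) ^ 2 = (2 / (b - a)) ^ 2 * ((b - s) * (s - a)) by
      field_simp; ring, sqrt_mul (sq_nonneg _), sqrt_sq (by positivity)]
  have hu : HasDerivAt (fun s => (2 * s - (a + b)) / (b - a)) (2 * 1 / (b - a)) s :=
    (((hasDerivAt_id s).const_mul 2).sub_const (a + b)).div_const (b - a)
  refine ((hasDerivAt_arcsin hgt.ne' hlt.ne).comp s hu).congr_deriv ?_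
  rw [hsqrt]; field_simp

lemma hasDerivAt_arcsin_mobius (ha : 0 < a) (hs : s ∈ Ioo a b) :
    HasDerivAt (fun s => arcsin (((a + b) * s - 2 * a * b) / ((b - a) * s)))
      (√(a * b) / (s * √((b - s) * (s - a)))) s := by
  obtain ⟨hs1, hs2⟩ := hs
  have hs0 : 0 < s := ha.trans hs1
  have hba : 0 < b - a := by linarith
  have hab : 0 < a * b := mul_pos ha (by linarith)
  have hQ : 0 < (b - s) * (s - a) := mul_pos (by linarith) (by linarith)
  have hq : 0 < √((b - s) * (s - a)) := sqrt_pos.2 hQ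
  have hr : 0 < √(a * b) := sqrt_pos.2 hab
  have hlt : ((a + b) * s - 2 * a * b) / ((b - a) * s) < 1 := by
    rw [div_lt_one (by positivity)]; nlinarith
  have hgt : -1 < ((a + b) * s - 2 * a * b) / ((b - a) * s) := by
    rw [lt_div_iff₀ (by positivity)]; nlinarith
  have hsqrt : √(1 - (((a + b) * s - 2 * a * b) / ((b - a) * s)) ^ 2) =
      2 / ((b - a) * s) * (√(a * b) * √((b - s) * (s - a))) := by
    rw [show 1 - (((a + b) * s - 2 * a * b) / ((b - a) * s)) ^ 2 =
        (2 / ((b - a) * s)) ^ 2 * ((a * b) * ((b - s) * (s - a))) by field_simp; ring,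
      sqrt_mul (sq_nonneg _), sqrt_sq (by positivity), sqrt_mul hab.le]
  have hu : HasDerivAt (fun s => ((a + b) * s - 2 * a * b) / ((b - a) * s))
      (((a + b) * 1 * ((b - a) * s) - ((a + b) * s - 2 * a * b) * ((b - a) * 1)) /
        ((b - a) * s) ^ 2) s :=
    (((hasDerivAt_id s).const_mul (a + b)).sub_const (2 * a * b)).div
      ((hasDerivAt_id s).const_mul (b - a)) (by positivity)
  refine ((hasDerivAt_arcsin hgt.ne' hlt.ne).comp s hu).congr_deriv ?_
  rw [hsqrt]
  field_simp
  rw [mul_comm b a, div_eq_iff hr.ne']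
  linear_combination (-2) * mul_self_sqrt hab.le

lemma arcsin_mobius_arg_right (ha : 0 < a) (hab : a < b) :
    ((a + b) * b - 2 * a * b) / ((b - a) * b) = 1 := by
  rw [div_eq_one_iff_eq (mul_pos (sub_pos.2 hab) (ha.trans hab)).ne']; ring

lemma arcsin_mobius_arg_left (ha : 0 < a) (hab : a < b) :
    ((a + b) * a - 2 * a * b) / ((b - a) * a) = -1 := by
  rw [div_eq_iff (mul_pos (sub_pos.2 hab) ha).ne']; ring

lemma continuousOn_arcsin_mobius (ha : 0 < a) (hab : a < b) :
    ContinuousOn (fun s => arcsin (((a + b) * s - 2 * a * b) / ((b - a) * s))) (Icc a b) :=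
  continuous_arcsin.comp_continuousOn (ContinuousOn.div (by fun_prop) (by fun_prop)
    fun s hs => (mul_pos (sub_pos.2 hab) (ha.trans_le hs.1)).ne')

lemma arcsin_affine_arg_right (hab : a < b) : (2 * b - (a + b)) / (b - a) = 1 := by
  rw [div_eq_one_iff_eq (sub_pos.2 hab).ne']; ring

lemma arcsin_affine_arg_left (hab : a < b) : (2 * a - (a + b)) / (b - a) = -1 := by
  rw [div_eq_iff (sub_pos.2 hab).ne']; ring

noncomputable def sqrtDivSqAntideriv (a b s : ℝ) : ℝ :=
  -arcsin ((2 * s - (a + b)) / (b - a)) +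
    (a + b) / (2 * √(a * b)) * arcsin (((a + b) * s - 2 * a * b) / ((b - a) * s)) -
    √((b - s) * (s - a)) / s

lemma hasDerivAt_sqrtDivSqAntideriv (ha : 0 < a) (hs : s ∈ Ioo a b) :
    HasDerivAt (sqrtDivSqAntideriv a b) (√((b - s) * (s - a)) / s ^ 2) s := by
  have hs0 : 0 < s := ha.trans hs.1
  have hQ : 0 < (b - s) * (s - a) := mul_pos (sub_pos.2 hs.2) (sub_pos.2 hs.1)
  have hq : 0 < √((b - s) * (s - a)) := sqrt_pos.2 hQ
  have hr : 0 < √(a * b) := sqrt_pos.2 (mul_pos ha (ha.trans (hs.1.trans hs.2)))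
  have hquot := hasDerivAt_sqrt_sub_mul_sub_div_pow 1 hs0.ne' hs
  norm_num only [pow_one] at hquot
  refine (((hasDerivAt_arcsin_affine hs).neg.add
    ((hasDerivAt_arcsin_mobius ha hs).const_mul ((a + b) / (2 * √(a * b))))).sub
    hquot).congr_deriv ?_
  have hq2 := sq_sqrt hQ.le
  set q := √((b - s) * (s - a))
  set r := √(a * b)
  field_simp
  rw [hq2]
  ring

theorem integral_sqrt_sub_mul_sub_div_sq (ha : 0 < a) (hab : a < b) :
    ∫ s in a..b, √((b - s) * (s - a)) / s ^ 2 = π * (a + b) / (2 * √(a * b)) - π := by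
  have hpos : ∀ s ∈ Icc a b, s ≠ 0 := fun s hs => (ha.trans_le hs.1).ne'
  have hsqrt : Continuous fun s => √((b - s) * (s - a)) := by fun_prop
  have hcont : ContinuousOn (sqrtDivSqAntideriv a b) (Icc a b) :=
    ((continuous_arcsin.comp (by fun_prop)).continuousOn.neg.add
      (continuousOn_const.mul (continuousOn_arcsin_mobius ha hab))).sub
      (hsqrt.continuousOn.div continuousOn_id hpos)
  have hint : IntervalIntegrable (fun s => √((b - s) * (s - a)) / s ^ 2) volume a b :=
    (hsqrt.continuousOn.div (by fun_prop) fun s hs =>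
      pow_ne_zero 2 (hpos s hs)).intervalIntegrable_of_Icc hab.le
  rw [intervalIntegral.integral_eq_sub_of_hasDerivAt_of_le hab.le hcont
    (fun s hs => hasDerivAt_sqrtDivSqAntideriv ha hs) hint]
  simp only [sqrtDivSqAntideriv, arcsin_affine_arg_right hab, arcsin_affine_arg_left hab,
    arcsin_mobius_arg_right ha hab, arcsin_mobius_arg_left ha hab, arcsin_one, arcsin_neg_one,
    sub_self, mul_zero, zero_mul, sqrt_zero, zero_div]
  have hr : 0 < √(a * b) := sqrt_pos.2 (mul_pos ha (ha.trans hab))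
  field_simp
  ring

noncomputable def sqrtDivCubeAntideriv (a b s : ℝ) : ℝ :=
  (b - a) ^ 2 / (8 * a * b * √(a * b)) * arcsin (((a + b) * s - 2 * a * b) / ((b - a) * s)) +
    (a + b) / (4 * a * b) * (√((b - s) * (s - a)) / s) -
    √((b - s) * (s - a)) / s ^ 2 / 2

lemma hasDerivAt_sqrtDivCubeAntideriv (ha : 0 < a) (hs : s ∈ Ioo a b) :
    HasDerivAt (sqrtDivCubeAntideriv a b) (√((b - s) * (s - a)) / s ^ 3) s := by
  have hs0 : 0 < s := ha.trans hs.1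
  have hb : 0 < b := hs0.trans hs.2
  have hQ : 0 < (b - s) * (s - a) := mul_pos (sub_pos.2 hs.2) (sub_pos.2 hs.1)
  have hq : 0 < √((b - s) * (s - a)) := sqrt_pos.2 hQ
  have hr : 0 < √(a * b) := sqrt_pos.2 (mul_pos ha hb)
  have hquot1 := hasDerivAt_sqrt_sub_mul_sub_div_pow 1 hs0.ne' hs
  have hquot2 := hasDerivAt_sqrt_sub_mul_sub_div_pow 2 hs0.ne' hs
  norm_num only [pow_one] at hquot1 hquot2
  refine ((((hasDerivAt_arcsin_mobius ha hs).const_mul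
    ((b - a) ^ 2 / (8 * a * b * √(a * b)))).add (hquot1.const_mul ((a + b) / (4 * a * b)))).sub
    (hquot2.div_const 2)).congr_deriv ?_
  have hq2 := sq_sqrt hQ.le
  set q := √((b - s) * (s - a))
  set r := √(a * b)
  field_simp
  rw [hq2]
  ring

theorem integral_sqrt_sub_mul_sub_div_cube (ha : 0 < a) (hab : a < b) :
    ∫ s in a..b, √((b - s) * (s - a)) / s ^ 3 = π * (b - a) ^ 2 / (8 * a * b * √(a * b)) := by
  have hpos : ∀ s ∈ Icc a b, s ≠ 0 := fun s hs => (ha.trans_le hs.1).ne'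
  have hsqrt : Continuous fun s => √((b - s) * (s - a)) := by fun_prop
  have hcont : ContinuousOn (sqrtDivCubeAntideriv a b) (Icc a b) :=
    ((continuousOn_const.mul (continuousOn_arcsin_mobius ha hab)).add
      (continuousOn_const.mul (hsqrt.continuousOn.div continuousOn_id hpos))).sub
      ((hsqrt.continuousOn.div (by fun_prop) fun s hs => pow_ne_zero 2 (hpos s hs)).div_const 2)
  have hint : IntervalIntegrable (fun s => √((b - s) * (s - a)) / s ^ 3) volume a b :=
    (hsqrt.continuousOn.div (by fun_prop) fun s hs =>
      pow_ne_zero 3 (hpos s hs)).intervalIntegrable_of_Icc hab.le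
  rw [intervalIntegral.integral_eq_sub_of_hasDerivAt_of_le hab.le hcont
    (fun s hs => hasDerivAt_sqrtDivCubeAntideriv ha hs) hint]
  simp only [sqrtDivCubeAntideriv, arcsin_mobius_arg_right ha hab, arcsin_mobius_arg_left ha hab,
    arcsin_one, arcsin_neg_one, sub_self, mul_zero, zero_mul, sqrt_zero, zero_div]
  have hr : 0 < √(a * b) := sqrt_pos.2 (mul_pos ha (ha.trans hab))
  field_simp
  ring

end SemicircleIntegrals

section CauchySchwarz

variable {α : Type*} [MeasurableSpace α] {μ : Measure α} {u v w : α → ℝ}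

theorem sq_integral_le_integral_mul_integral (hu : Integrable u μ) (hv : Integrable v μ)
    (hw : Integrable w μ) (hu0 : ∀ᵐ x ∂μ, 0 ≤ u x) (hv0 : ∀ᵐ x ∂μ, 0 ≤ v x)
    (hwuv : ∀ᵐ x ∂μ, w x ^ 2 ≤ u x * v x) :
    (∫ x, w x ∂μ) ^ 2 ≤ (∫ x, u x ∂μ) * ∫ x, v x ∂μ := by
  have hquad : ∀ t : ℝ,
      0 ≤ (∫ x, u x ∂μ) * (t * t) + (-2 * ∫ x, w x ∂μ) * t + ∫ x, v x ∂μ := by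
    intro t
    have hint : ∫ x, (u x * (t * t) + -2 * t * w x + v x) ∂μ =
        (∫ x, u x ∂μ) * (t * t) + (-2 * ∫ x, w x ∂μ) * t + ∫ x, v x ∂μ := by
      have huw : Integrable (fun x => u x * (t * t) + -2 * t * w x) μ :=
        (hu.mul_const _).add (hw.const_mul _)
      rw [integral_add huw hv, integral_add (hu.mul_const _) (hw.const_mul _), integral_mul_const,
        integral_const_mul]
      ring
    rw [← hint]
    refine integral_nonneg_of_ae ?_
    filter_upwards [hu0, hv0, hwuv] with x hux hvx hwx
    rw [Pi.zero_apply]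
    rcases hux.eq_or_lt with hu0x | hupos
    · have hw0 : w x = 0 := by nlinarith
      rw [← hu0x, hw0]; linarith
    · -- u (u t² - 2 w t + v) = (u t - w)² + (u v - w²)
      nlinarith [sq_nonneg (u x * t + -w x)]
  have := discrim_le_zero hquad
  rw [discrim] at this
  linarith

end CauchySchwarz

section ResolventMoments

variable {μ : Measure ℝ} {lam : ℝ}

lemma integrable_one_div_add (hpos : ∀ᵐ s ∂μ, 0 < s) (hinv : Integrable (fun s => 1 / s) μ)
    (hlam : 0 ≤ lam) : Integrable (fun s => 1 / (s + lam)) μ :=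
  hinv.mono' (by fun_prop : Measurable fun s : ℝ => 1 / (s + lam)).aestronglyMeasurable <| by
    filter_upwards [hpos] with s hs
    rw [norm_of_nonneg (by positivity)]
    gcongr; linarith

lemma integrable_div_add_sq (hpos : ∀ᵐ s ∂μ, 0 < s) (hinv : Integrable (fun s => 1 / s) μ)
    (hlam : 0 ≤ lam) : Integrable (fun s => s / (s + lam) ^ 2) μ :=
  hinv.mono' (by fun_prop : Measurable fun s : ℝ => s / (s + lam) ^ 2).aestronglyMeasurable <| by
    filter_upwards [hpos] with s hs
    rw [norm_of_nonneg (by positivity), div_le_div_iff₀ (by positivity) hs]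
    nlinarith

lemma integrable_one_div_add_sq (hpos : ∀ᵐ s ∂μ, 0 < s)
    (hinv2 : Integrable (fun s => 1 / s ^ 2) μ) (hlam : 0 ≤ lam) :
    Integrable (fun s => 1 / (s + lam) ^ 2) μ :=
  hinv2.mono' (by fun_prop : Measurable fun s : ℝ => 1 / (s + lam) ^ 2).aestronglyMeasurable <| by
    filter_upwards [hpos] with s hs
    rw [norm_of_nonneg (by positivity)]
    gcongr; linarith

lemma integrable_one_div_mul_add (hpos : ∀ᵐ s ∂μ, 0 < s)
    (hinv2 : Integrable (fun s => 1 / s ^ 2) μ) (hlam : 0 ≤ lam) :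
    Integrable (fun s => 1 / (s * (s + lam))) μ :=
  hinv2.mono' (by fun_prop : Measurable fun s : ℝ => 1 / (s * (s + lam))).aestronglyMeasurable <| by
    filter_upwards [hpos] with s hs
    rw [norm_of_nonneg (by positivity), sq]
    gcongr; linarith

lemma integral_one_div_eq_add (hpos : ∀ᵐ s ∂μ, 0 < s) (hinv : Integrable (fun s => 1 / s) μ)
    (hinv2 : Integrable (fun s => 1 / s ^ 2) μ) (hlam : 0 ≤ lam) :
    ∫ s, 1 / s ∂μ = ∫ s, 1 / (s + lam) ∂μ + lam * ∫ s, 1 / (s * (s + lam)) ∂μ := by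
  rw [← integral_const_mul, ← integral_add (integrable_one_div_add hpos hinv hlam)
    ((integrable_one_div_mul_add hpos hinv2 hlam).const_mul lam)]
  refine integral_congr_ae ?_
  filter_upwards [hpos] with s hs
  have : 0 < s + lam := by linarith
  field_simp

lemma sq_integral_one_div_add_le (hpos : ∀ᵐ s ∂μ, 0 < s)
    (hinv : Integrable (fun s => 1 / s) μ) (hlam : 0 ≤ lam) :
    (∫ s, 1 / (s + lam) ∂μ) ^ 2 ≤ (∫ s, s / (s + lam) ^ 2 ∂μ) * ∫ s, 1 / s ∂μ := by
  refine sq_integral_le_integral_mul_integral (integrable_div_add_sq hpos hinv hlam) hinv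
    (integrable_one_div_add hpos hinv hlam) ?_ ?_ ?_ <;> filter_upwards [hpos] with s hs
  · positivity
  · positivity
  · have : 0 < s + lam := by linarith
    exact le_of_eq (by field_simp)

lemma sq_integral_one_div_mul_add_le (hpos : ∀ᵐ s ∂μ, 0 < s)
    (hinv2 : Integrable (fun s => 1 / s ^ 2) μ) (hlam : 0 ≤ lam) :
    (∫ s, 1 / (s * (s + lam)) ∂μ) ^ 2 ≤ (∫ s, 1 / (s + lam) ^ 2 ∂μ) * ∫ s, 1 / s ^ 2 ∂μ := by
  refine sq_integral_le_integral_mul_integral (integrable_one_div_add_sq hpos hinv2 hlam) hinv2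
    (integrable_one_div_mul_add hpos hinv2 hlam) ?_ ?_ ?_ <;> filter_upwards [hpos] with s hs
  · positivity
  · positivity
  · have : 0 < s + lam := by linarith
    exact le_of_eq (by field_simp)

theorem sq_sub_sqrt_le_integral_div_add_sq_mul (hpos : ∀ᵐ s ∂μ, 0 < s)
    (hinv : Integrable (fun s => 1 / s) μ) (hinv2 : Integrable (fun s => 1 / s ^ 2) μ)
    (hlam : 0 ≤ lam) {τ : ℝ} (hτ : lam ^ 2 * ∫ s, 1 / (s + lam) ^ 2 ∂μ = τ)
    (hle : √(τ * ∫ s, 1 / s ^ 2 ∂μ) ≤ ∫ s, 1 / s ∂μ) :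
    (∫ s, 1 / s ∂μ - √(τ * ∫ s, 1 / s ^ 2 ∂μ)) ^ 2 ≤
      (∫ s, s / (s + lam) ^ 2 ∂μ) * ∫ s, 1 / s ∂μ := by
  have hK : lam * ∫ s, 1 / (s * (s + lam)) ∂μ ≤ √(τ * ∫ s, 1 / s ^ 2 ∂μ) := by
    refine (le_abs_self _).trans (abs_le_sqrt ?_)
    rw [mul_pow, ← hτ, mul_assoc]
    exact mul_le_mul_of_nonneg_left (sq_integral_one_div_mul_add_le hpos hinv2 hlam) (sq_nonneg _)
  have hm : ∫ s, 1 / s ∂μ - √(τ * ∫ s, 1 / s ^ 2 ∂μ) ≤ ∫ s, 1 / (s + lam) ∂μ := by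
    linarith [integral_one_div_eq_add hpos hinv hinv2 hlam]
  exact (pow_le_pow_left₀ (sub_nonneg.2 hle) hm 2).trans (sq_integral_one_div_add_le hpos hinv hlam)

end ResolventMoments

noncomputable def mpDensity (γ s : ℝ) : ℝ :=
  √(((1 + √γ) ^ 2 - s) * (s - (1 - √γ) ^ 2)) / (2 * π * γ * s)

section MarchenkoPastur

variable {γ : ℝ}

lemma MP_eq_withDensity (hγ0 : 0 < γ) (hγ1 : γ ≤ 1) :
    MP γ = (volume.restrict (Icc ((1 - √γ) ^ 2) ((1 + √γ) ^ 2))).withDensity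
      fun s => ENNReal.ofReal (mpDensity γ s) := by
  have hatom : max 0 (1 - 1 / γ) = 0 := max_eq_left (by rw [sub_nonpos, le_div_iff₀ hγ0]; linarith)
  rw [MP, hatom, ENNReal.ofReal_zero, zero_smul, zero_add,
    ← withDensity_indicator measurableSet_Icc]
  rfl

lemma ae_mem_Icc_MP (hγ0 : 0 < γ) (hγ1 : γ ≤ 1) :
    ∀ᵐ s ∂MP γ, s ∈ Icc ((1 - √γ) ^ 2) ((1 + √γ) ^ 2) := by
  rw [MP_eq_withDensity hγ0 hγ1]
  exact (withDensity_absolutelyContinuous _ _).ae_le (ae_restrict_mem measurableSet_Icc)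

lemma mpDensity_nonneg (hγ : 0 ≤ γ) {s : ℝ} (hs : 0 ≤ s) : 0 ≤ mpDensity γ s := by
  unfold mpDensity; positivity

lemma measurable_mpDensity (γ : ℝ) : Measurable (mpDensity γ) := by
  unfold mpDensity; fun_prop

lemma one_sub_sqrt_sq_pos (hγ1 : γ < 1) : 0 < (1 - √γ) ^ 2 :=
  pow_pos (sub_pos.2 ((sqrt_lt' one_pos).2 (by rwa [one_pow]))) 2

lemma continuousOn_mpDensity (hγ0 : 0 < γ) (hγ1 : γ < 1) :
    ContinuousOn (mpDensity γ) (Icc ((1 - √γ) ^ 2) ((1 + √γ) ^ 2)) :=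
  ContinuousOn.div (by fun_prop) (by fun_prop) fun s hs => by
    have := (one_sub_sqrt_sq_pos hγ1).trans_le hs.1
    positivity

lemma integrable_MP_of_continuousOn (hγ0 : 0 < γ) (hγ1 : γ < 1) {f : ℝ → ℝ}
    (hf : ContinuousOn f (Icc ((1 - √γ) ^ 2) ((1 + √γ) ^ 2))) : Integrable f (MP γ) := by
  rw [MP_eq_withDensity hγ0 hγ1.le, integrable_withDensity_iff_integrable_smul'
    (measurable_mpDensity γ).ennreal_ofReal (ae_of_all _ fun _ => ENNReal.ofReal_lt_top)]
  refine (((continuousOn_mpDensity hγ0 hγ1).mul hf).integrableOn_Icc).congr_fun (fun s hs => ?_)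
    measurableSet_Icc
  rw [ENNReal.toReal_ofReal (mpDensity_nonneg hγ0.le ((sq_nonneg _).trans hs.1)), smul_eq_mul,
    Pi.mul_apply]

lemma integral_MP (hγ0 : 0 < γ) (hγ1 : γ ≤ 1) (f : ℝ → ℝ) :
    ∫ s, f s ∂MP γ = ∫ s in Icc ((1 - √γ) ^ 2) ((1 + √γ) ^ 2), mpDensity γ s * f s := by
  rw [MP_eq_withDensity hγ0 hγ1, integral_withDensity_eq_integral_toReal_smul
    (measurable_mpDensity γ).ennreal_ofReal (ae_of_all _ fun _ => ENNReal.ofReal_lt_top)]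
  refine setIntegral_congr_fun measurableSet_Icc fun s hs => ?_
  rw [ENNReal.toReal_ofReal (mpDensity_nonneg hγ0.le ((sq_nonneg _).trans hs.1)), smul_eq_mul]

lemma ae_pos_MP (hγ0 : 0 < γ) (hγ1 : γ < 1) : ∀ᵐ s ∂MP γ, 0 < s :=
  (ae_mem_Icc_MP hγ0 hγ1.le).mono fun _ hs => (one_sub_sqrt_sq_pos hγ1).trans_le hs.1

lemma integrable_one_div_pow_MP (hγ0 : 0 < γ) (hγ1 : γ < 1) (n : ℕ) :
    Integrable (fun s => 1 / s ^ n) (MP γ) :=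
  integrable_MP_of_continuousOn hγ0 hγ1 <| continuousOn_const.div (by fun_prop) fun s hs =>
    pow_ne_zero n ((one_sub_sqrt_sq_pos hγ1).trans_le hs.1).ne'

theorem integral_one_div_MP (hγ0 : 0 < γ) (hγ1 : γ < 1) : ∫ s, 1 / s ∂MP γ = 1 / (1 - γ) := by
  have ha := one_sub_sqrt_sq_pos hγ1
  have hg := sqrt_pos.2 hγ0
  have hab : (1 - √γ) ^ 2 < (1 + √γ) ^ 2 := by nlinarith
  rw [integral_MP hγ0 hγ1.le, setIntegral_congr_fun measurableSet_Icc
    (g := fun s => (2 * π * γ)⁻¹ * (√(((1 + √γ) ^ 2 - s) * (s - (1 - √γ) ^ 2)) / s ^ 2))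
    (fun s _ => by unfold mpDensity; ring), integral_const_mul, integral_Icc_eq_integral_Ioc,
    ← intervalIntegral.integral_of_le hab.le, integral_sqrt_sub_mul_sub_div_sq ha hab]
  obtain ⟨g, hg0, rfl⟩ : ∃ g, 0 < g ∧ γ = g ^ 2 := ⟨√γ, hg, (sq_sqrt hγ0.le).symm⟩
  have hg1 : 0 < 1 - g ^ 2 := by linarith
  rw [sqrt_sq hg0.le, show (1 - g) ^ 2 * (1 + g) ^ 2 = (1 - g ^ 2) ^ 2 by ring, sqrt_sq hg1.le]
  field_simp
  ring

theorem integral_one_div_sq_MP (hγ0 : 0 < γ) (hγ1 : γ < 1) :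
    ∫ s, 1 / s ^ 2 ∂MP γ = 1 / (1 - γ) ^ 3 := by
  have ha := one_sub_sqrt_sq_pos hγ1
  have hg := sqrt_pos.2 hγ0
  have hab : (1 - √γ) ^ 2 < (1 + √γ) ^ 2 := by nlinarith
  rw [integral_MP hγ0 hγ1.le, setIntegral_congr_fun measurableSet_Icc
    (g := fun s => (2 * π * γ)⁻¹ * (√(((1 + √γ) ^ 2 - s) * (s - (1 - √γ) ^ 2)) / s ^ 3))
    (fun s _ => by unfold mpDensity; ring), integral_const_mul, integral_Icc_eq_integral_Ioc,
    ← intervalIntegral.integral_of_le hab.le, integral_sqrt_sub_mul_sub_div_cube ha hab]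
  obtain ⟨g, hg0, rfl⟩ : ∃ g, 0 < g ∧ γ = g ^ 2 := ⟨√γ, hg, (sq_sqrt hγ0.le).symm⟩
  have hg1 : 0 < 1 - g ^ 2 := by linarith
  have hg1' : 0 < 1 - g := by nlinarith
  rw [sqrt_sq hg0.le, show (1 - g) ^ 2 * (1 + g) ^ 2 = (1 - g ^ 2) ^ 2 by ring, sqrt_sq hg1.le]
  field_simp
  ring

end MarchenkoPastur

theorem stmt17_general (γ : ℝ) (hγ0 : 0 < γ) (hγ1 : γ < 1)
    (τ : ℝ) (hτ : τ ≤ 1 - γ)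
    (lam : ℝ) (hlam : 0 ≤ lam)
    (hfp : lam ^ 2 * ∫ s, 1 / (s + lam) ^ 2 ∂(MP γ) = τ) :
    γ / (1 - γ) * (1 - Real.sqrt (τ / (1 - γ))) ^ 2 ≤
      γ * ∫ s, s / (s + lam) ^ 2 ∂(MP γ) := by
  have hu : 0 < 1 - γ := sub_pos.2 hγ1
  have key := sq_sub_sqrt_le_integral_div_add_sq_mul (ae_pos_MP hγ0 hγ1)
    (by simpa using integrable_one_div_pow_MP hγ0 hγ1 1) (integrable_one_div_pow_MP hγ0 hγ1 2)
    hlam hfp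
  set t := √(τ / (1 - γ))
  have hsqrt : √(τ * (1 / (1 - γ) ^ 3)) = t / (1 - γ) := by
    rw [show τ * (1 / (1 - γ) ^ 3) = τ / (1 - γ) / (1 - γ) ^ 2 by field_simp,
      sqrt_div' _ (sq_nonneg _), sqrt_sq hu.le]
  have ht : t ≤ 1 := sqrt_le_one.2 ((div_le_one hu).2 hτ)
  rw [integral_one_div_MP hγ0 hγ1, integral_one_div_sq_MP hγ0 hγ1, hsqrt] at key
  specialize key (div_le_div_of_nonneg_right ht hu.le)
  calc γ / (1 - γ) * (1 - t) ^ 2 = γ * ((1 / (1 - γ) - t / (1 - γ)) ^ 2 * (1 - γ)) := by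
        field_simp
    _ ≤ γ * ((∫ s, s / (s + lam) ^ 2 ∂MP γ) * (1 / (1 - γ)) * (1 - γ)) := by gcongr
    _ = γ * ∫ s, s / (s + lam) ^ 2 ∂MP γ := by field_simp

theorem stmt17 (γ : ℝ) (hγ0 : 0 < γ) (hγ1 : γ < 1)
    (τ : ℝ) (hτ0 : 0 ≤ τ) (hτ : τ ≤ 1 - γ)
    (lam : ℝ) (hlam : 0 ≤ lam)
    (hfp : lam ^ 2 * ∫ s, 1 / (s + lam) ^ 2 ∂(MP γ) = τ) :
    γ / (1 - γ) * (1 - Real.sqrt (τ / (1 - γ))) ^ 2 ≤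
      γ * ∫ s, s / (s + lam) ^ 2 ∂(MP γ) :=
  stmt17_general γ hγ0 hγ1 τ hτ lam hlam hfp
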